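/- arXiv:2206.14239 — 3 statements merged into one kernel-verified Lean document; each statement's English description precedes it below -/
import Mathlib

section
/- Let f₁^τ(x,y) = (x + τ sin y, y) and f₂^τ(x,y) = (x, y + τ sin x) on the torus ℝ²/(2πℤ)². For every point (x,y) on the torus with (x,y) not a common zero of sin, i.e. not in {0,π}², and every nonempty open set U of the torus, there exist finitely many nonnegative numbers τ₁, …, τ_{2n} such that (f₂^{τ_{2n}} ∘ f₁^{τ_{2n-1}} ∘ … ∘ f₂^{τ₂} ∘ f₁^{τ₁})(x,y) ∈ U. -/
open Real MeasureTheory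

instance : Fact ((0:ℝ) < 2 * π) := ⟨by positivity⟩

noncomputable def sinT : AddCircle (2 * π) → ℝ := Real.sin_periodic.lift

noncomputable def f₁ (τ : ℝ) (p : AddCircle (2 * π) × AddCircle (2 * π)) :
    AddCircle (2 * π) × AddCircle (2 * π) := (p.1 + ↑(τ * sinT p.2), p.2)

noncomputable def f₂ (τ : ℝ) (p : AddCircle (2 * π) × AddCircle (2 * π)) :
    AddCircle (2 * π) × AddCircle (2 * π) := (p.1, p.2 + ↑(τ * sinT p.1))

def fixedSet : Set (AddCircle (2 * π) × AddCircle (2 * π)) :=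
  {p | (p.1 = ((0:ℝ) : AddCircle (2 * π)) ∨ p.1 = ((π : ℝ) : AddCircle (2 * π))) ∧
       (p.2 = ((0:ℝ) : AddCircle (2 * π)) ∨ p.2 = ((π : ℝ) : AddCircle (2 * π)))}

lemma sinT_coe (r : ℝ) : sinT (r : AddCircle (2 * π)) = Real.sin r :=
  Real.sin_periodic.lift_coe r

lemma coe_add_int_mul (r : ℝ) (k : ℤ) :
    ((r + k * (2 * π) : ℝ) : AddCircle (2 * π)) = (r : AddCircle (2 * π)) := by
  have h : ((k * (2 * π) : ℝ) : AddCircle (2 * π)) = 0 := by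
    rw [AddCircle.coe_eq_zero_iff]
    exact ⟨k, by simp [zsmul_eq_mul]⟩
  rw [AddCircle.coe_add, h, add_zero]

lemma reach (s : ℝ) (hs : s ≠ 0) (x w : AddCircle (2 * π)) :
    ∃ τ : ℝ, 0 ≤ τ ∧ x + ((τ * s : ℝ) : AddCircle (2 * π)) = w := by
  obtain ⟨r, hr⟩ : ∃ r : ℝ, (r : AddCircle (2 * π)) = w - x :=
    Quotient.exists_rep (w - x)
  have h2π : (0:ℝ) < 2 * π := by positivity
  rcases hs.lt_or_gt with hneg | hpos
  · obtain ⟨n, hn⟩ := exists_nat_ge (r / (2 * π))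
    have hnum : r + (-(n:ℤ)) * (2 * π) ≤ 0 := by
      push_cast
      nlinarith [(div_le_iff₀ h2π).mp hn]
    refine ⟨(r + (-(n:ℤ)) * (2 * π)) / s, div_nonneg_iff.mpr (Or.inr ⟨hnum, hneg.le⟩), ?_⟩
    have hc := coe_add_int_mul r (-(n:ℤ))
    push_cast at hc
    rw [div_mul_cancel₀ _ hs]; push_cast; rw [hc, hr, add_sub_cancel]
  · obtain ⟨n, hn⟩ := exists_nat_ge (-r / (2 * π))
    have hnum : 0 ≤ r + (n:ℤ) * (2 * π) := by
      push_cast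
      nlinarith [(div_le_iff₀ h2π).mp hn]
    refine ⟨(r + (n:ℤ) * (2 * π)) / s, div_nonneg hnum hpos.le, ?_⟩
    have hc := coe_add_int_mul r (n:ℤ)
    push_cast at hc
    rw [div_mul_cancel₀ _ hs]; push_cast; rw [hc, hr, add_sub_cancel]

lemma sinT_eq_zero (z : AddCircle (2 * π)) (h : sinT z = 0) :
    z = ((0:ℝ) : AddCircle (2 * π)) ∨ z = ((π:ℝ) : AddCircle (2 * π)) := by
  obtain ⟨r, rfl⟩ : ∃ r : ℝ, (r : AddCircle (2 * π)) = z := Quotient.exists_rep z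
  rw [sinT_coe] at h
  obtain ⟨n, hn⟩ := Real.sin_eq_zero_iff.mp h
  rcases Int.even_or_odd n with ⟨m, hm⟩ | ⟨m, hm⟩
  · left
    rw [← hn, hm]
    have : ((m + m : ℤ) : ℝ) * π = 0 + (m : ℤ) * (2 * π) := by push_cast; ring
    rw [this, coe_add_int_mul]
  · right
    rw [← hn, hm]
    have : ((2 * m + 1 : ℤ) : ℝ) * π = π + (m : ℤ) * (2 * π) := by push_cast; ring
    rw [this, coe_add_int_mul]

lemma perturb (a : ℝ) (ε : ℝ) (hε : 0 < ε) :
    ∃ a' : ℝ, |a' - a| < ε ∧ Real.sin a' ≠ 0 := by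
  by_cases h : Real.sin a = 0
  · obtain ⟨n, hn⟩ := Real.sin_eq_zero_iff.mp h
    set δ : ℝ := min (ε / 2) (π / 2) with hδ
    have hδpos : 0 < δ := lt_min (by linarith) (by positivity)
    have hδε : δ < ε := lt_of_le_of_lt (min_le_left _ _) (by linarith)
    have hδπ : δ < π := lt_of_le_of_lt (min_le_right _ _) (by linarith [Real.pi_pos])
    refine ⟨a + δ, by rw [add_sub_cancel_left, abs_of_pos hδpos]; exact hδε, ?_⟩
    rw [← hn, add_comm, Real.sin_add_int_mul_pi]
    have hpos : Real.sin δ > 0 := Real.sin_pos_of_pos_of_lt_pi hδpos hδπ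
    have hne : ((-1 : ℝ)) ^ n ≠ 0 := by apply zpow_ne_zero; norm_num
    exact mul_ne_zero hne hpos.ne'
  · exact ⟨a, by simpa using hε, h⟩

lemma exists_good (U : Set (AddCircle (2 * π) × AddCircle (2 * π))) (hU : IsOpen U)
    (hUne : U.Nonempty) : ∃ u ∈ U, sinT u.1 ≠ 0 := by
  obtain ⟨v, hv⟩ := hUne
  obtain ⟨a, ha⟩ : ∃ a : ℝ, (a : AddCircle (2 * π)) = v.1 := Quotient.exists_rep v.1
  have cont : Continuous (fun t : ℝ => ((t : AddCircle (2 * π)), v.2)) :=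
    (AddCircle.continuous_mk' (2 * π)).prodMk continuous_const
  have hopen : IsOpen ((fun t : ℝ => ((t : AddCircle (2 * π)), v.2)) ⁻¹' U) :=
    hU.preimage cont
  have hveq : ((a : AddCircle (2 * π)), v.2) = v := Prod.ext ha rfl
  have hmem : a ∈ (fun t : ℝ => ((t : AddCircle (2 * π)), v.2)) ⁻¹' U := by
    simp only [Set.mem_preimage]
    rw [hveq]; exact hv
  obtain ⟨ε, hε, hball⟩ := Metric.isOpen_iff.mp hopen a hmem
  obtain ⟨a', ha1, ha2⟩ := perturb a ε hε
  refine ⟨((a' : AddCircle (2 * π)), v.2), hball ?_, by simpa [sinT_coe] using ha2⟩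
  simpa [Real.dist_eq] using ha1

/-- Topological irreducibility of the one-point chain: any non-fixed point of the torus can be
steered into any nonempty open set by alternately applying `f₁` and `f₂` with nonnegative
durations. -/
theorem one_point_chain_reachable
    (p : AddCircle (2 * π) × AddCircle (2 * π)) (hp : p ∉ fixedSet)
    (U : Set (AddCircle (2 * π) × AddCircle (2 * π))) (hU : IsOpen U) (hUne : U.Nonempty) :
    ∃ l : List (ℝ × ℝ), (∀ τ ∈ l, 0 ≤ τ.1 ∧ 0 ≤ τ.2) ∧
      l.foldl (fun q τ => f₂ τ.2 (f₁ τ.1 q)) p ∈ U := by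
  obtain ⟨u, huU, hu1⟩ := exists_good U hU hUne
  -- Step 0: make the second coordinate have nonzero sine
  obtain ⟨σ₀, hσ₀, hy0⟩ :
      ∃ σ₀ : ℝ, 0 ≤ σ₀ ∧ sinT (p.2 + ((σ₀ * sinT p.1 : ℝ) : AddCircle (2 * π))) ≠ 0 := by
    by_cases h2 : sinT p.2 = 0
    · have hp2 : p.2 = ((0:ℝ) : AddCircle (2 * π)) ∨ p.2 = ((π:ℝ) : AddCircle (2 * π)) :=
        sinT_eq_zero _ h2
      have hp1 : sinT p.1 ≠ 0 := by
        intro h1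
        exact hp ⟨sinT_eq_zero _ h1, hp2⟩
      obtain ⟨σ₀, hσ₀, hw⟩ := reach (sinT p.1) hp1 p.2 ((π/2 : ℝ) : AddCircle (2 * π))
      refine ⟨σ₀, hσ₀, ?_⟩
      rw [hw, sinT_coe, Real.sin_pi_div_two]
      norm_num
    · refine ⟨0, le_refl 0, ?_⟩
      simpa using h2
  set y0 : AddCircle (2 * π) := p.2 + ((σ₀ * sinT p.1 : ℝ) : AddCircle (2 * π)) with hy0def
  obtain ⟨τ₁, hτ₁, hx⟩ := reach (sinT y0) hy0 p.1 u.1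
  obtain ⟨σ₂, hσ₂, hy⟩ := reach (sinT u.1) hu1 y0 u.2
  refine ⟨[(0, σ₀), (τ₁, σ₂)], ?_, ?_⟩
  · intro τ hτ
    simp only [List.mem_cons, List.not_mem_nil, or_false] at hτ
    rcases hτ with rfl | rfl
    · exact ⟨le_refl 0, hσ₀⟩
    · exact ⟨hτ₁, hσ₂⟩
  · have hf10 : f₁ 0 p = p := by
      simp [f₁]
    simp only [List.foldl_cons, List.foldl_nil, hf10]
    have h1 : f₂ σ₀ p = (p.1, y0) := by simp [f₂, hy0def]
    rw [h1]
    have h2 : f₁ τ₁ (p.1, y0) = (u.1, y0) := by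
      simp only [f₁]
      exact Prod.ext hx rfl
    rw [h2]
    have h3 : f₂ σ₂ (u.1, y0) = u := by
      simp only [f₂]
      exact Prod.ext rfl hy
    rw [h3]
    exact huU
end

section
/- Let V(x, y) = max(|x|, |y|)^{−α} for (x,y) near (0,0) in ℝ² \ {(0,0)}, with α = 1/20, and let Φ₁ be the random map obtained by applying f₁^{τ₁} then f₂^{τ₂} with τ₁, τ₂ independent uniform on [0, T]. For T ≥ 5·10⁵ there exist r₀ > 0 and c = 1 − 10⁻⁴ < 1 such that E[V(Φ₁(x,y))] ≤ c·V(x,y) for all (x,y) ∈ [−r₀, r₀]² \ {(0,0)}. -/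
open Real MeasureTheory

/-- The Lyapunov function `V(x,y) = max(|x|,|y|)^{-1/20}` blowing up at the fixed point `(0,0)`. -/
noncomputable def Vdrift (p : ℝ × ℝ) : ℝ := (max |p.1| |p.2|) ^ (-(1/20 : ℝ))

/-- One step of the random chain: apply `f₁^{τ₁}` then `f₂^{τ₂}` (in local coordinates near the
fixed point `(0,0)`). -/
noncomputable def oneStep (τ : ℝ × ℝ) (p : ℝ × ℝ) : ℝ × ℝ :=
  (p.1 + τ.1 * Real.sin p.2, p.2 + τ.2 * Real.sin (p.1 + τ.1 * Real.sin p.2))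

/-!
Bound `V ∘ Φ₁` by `|u|^{-1/20}`, where `u` is either coordinate of `Φ₁(x, y)`. Everything rests on
one estimate: among intervals of length `L`, the integral of `|u|^{-α}` is largest on the one
centred at `0`, so the average of `|a + τ s|^{-α}` over `τ ∈ [0, T]` is at most
`2^α / (1 - α) · (T |s|)^{-α}`. With `s = sin y` and `r = max |x| |y|`: if the first shear `T |s|`
is large compared with `r`, the first coordinate alone gives the contraction. Otherwise
`|y| ≤ 2 |s| ≪ r`, so `r = |x|`, the first coordinate `x + τ₁ s` stays in a small interval, and the
second shear `τ₂ sin (x + τ₁ s)` is large; averaging the second coordinate in `τ₂` and then in `τ₁`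
gives the contraction (applying the estimate a second time when `T |s|` is comparable to `r`).

The majorants are taken in `ℝ≥0∞` as `‖u‖ₑ ^ (-α)`, which is `∞` at `u = 0` (whereas the real
`0 ^ (-α)` is `0`), so the pointwise bounds hold everywhere and Tonelli's inequality needs neither
measurability nor integrability.
-/

open Set

section OneDim

variable {α : ℝ}

lemma intervalIntegrable_abs_rpow_neg (hα : α < 1) (a b : ℝ) :
    IntervalIntegrable (fun u : ℝ => |u| ^ (-α)) volume a b := by
  have hloc : LocallyIntegrable (fun u : ℝ => |u| ^ (-α)) volume :=
    locallyIntegrable_of_norm_le_rpow (C := 1) (by simp) (by simpa using hα)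
      (ae_of_all _ fun u => by simp [abs_nonneg, Real.abs_rpow_of_nonneg])
      (continuous_abs.measurable.pow_const _).aestronglyMeasurable
  exact (hloc.integrableOn_isCompact isCompact_uIcc).intervalIntegrable

lemma integral_abs_rpow_neg_le_of_nonneg (hα0 : 0 ≤ α) (hα1 : α < 1) {b c : ℝ} (hb : 0 ≤ b)
    (hbc : b ≤ c) : ∫ u in b..c, |u| ^ (-α) ≤ (c - b) ^ (1 - α) / (1 - α) := by
  have habs : ∫ u in b..c, |u| ^ (-α) = ∫ u in b..c, u ^ (-α) :=
    intervalIntegral.integral_congr fun u hu => by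
      rw [uIcc_of_le hbc] at hu
      rw [abs_of_nonneg (hb.trans hu.1)]
  have hsub : c ^ (1 - α) ≤ b ^ (1 - α) + (c - b) ^ (1 - α) := by
    simpa using rpow_add_le_add_rpow hb (sub_nonneg.2 hbc) (by linarith) (by linarith)
  rw [habs, integral_rpow (Or.inl (by linarith)), neg_add_eq_sub]
  gcongr
  linarith

lemma rpow_add_rpow_le_two_rpow_mul {p x y : ℝ} (hp0 : 0 ≤ p) (hp1 : p ≤ 1) (hx : 0 ≤ x)
    (hy : 0 ≤ y) : x ^ p + y ^ p ≤ 2 ^ (1 - p) * (x + y) ^ p := by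
  have hmid := (Real.concaveOn_rpow hp0 hp1).2 (mem_Ici.2 hx) (mem_Ici.2 hy)
    (by norm_num : (0:ℝ) ≤ 1/2) (by norm_num : (0:ℝ) ≤ 1/2) (by norm_num)
  simp only [smul_eq_mul, ← mul_add] at hmid
  rw [mul_rpow (by norm_num) (by linarith), div_rpow zero_le_one zero_le_two, one_rpow] at hmid
  have h2 : (2:ℝ) ^ (1 - p) = 2 / 2 ^ p := by rw [rpow_sub two_pos, rpow_one]
  rw [one_div, div_mul_eq_mul_div, inv_mul_le_iff₀ two_pos] at hmid
  calc x ^ p + y ^ p ≤ 2 * (1 * (x + y) ^ p / 2 ^ p) := hmid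
    _ = 2 ^ (1 - p) * (x + y) ^ p := by rw [h2]; ring

lemma integral_abs_rpow_neg_le (hα0 : 0 ≤ α) (hα1 : α < 1) {b c : ℝ} (hbc : b ≤ c) :
    ∫ u in b..c, |u| ^ (-α) ≤ 2 ^ α / (1 - α) * (c - b) ^ (1 - α) := by
  have hp : 0 < 1 - α := by linarith
  have hreflect : ∀ b c : ℝ, ∫ u in b..c, |u| ^ (-α) = ∫ u in -c..-b, |u| ^ (-α) := fun b c => by
    simpa using intervalIntegral.integral_comp_neg (a := b) (b := c) (fun u : ℝ => |u| ^ (-α))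
  have hweaken : (c - b) ^ (1 - α) / (1 - α) ≤ 2 ^ α / (1 - α) * (c - b) ^ (1 - α) := by
    rw [div_mul_eq_mul_div]
    gcongr
    exact le_mul_of_one_le_left (by positivity) (one_le_rpow one_le_two hα0)
  rcases le_total 0 b with hb | hb
  · exact (integral_abs_rpow_neg_le_of_nonneg hα0 hα1 hb hbc).trans hweaken
  rcases le_total c 0 with hc | hc
  · rw [hreflect]
    refine (integral_abs_rpow_neg_le_of_nonneg hα0 hα1 (neg_nonneg.2 hc) (neg_le_neg hbc)).trans ?_
    rwa [neg_sub_neg]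
  have hleft : ∫ u in b..0, |u| ^ (-α) ≤ (-b) ^ (1 - α) / (1 - α) := by
    simpa [hreflect b 0] using integral_abs_rpow_neg_le_of_nonneg hα0 hα1 le_rfl (neg_nonneg.2 hb)
  have hright : ∫ u in (0:ℝ)..c, |u| ^ (-α) ≤ c ^ (1 - α) / (1 - α) := by
    simpa using integral_abs_rpow_neg_le_of_nonneg hα0 hα1 le_rfl hc
  have hconcave := rpow_add_rpow_le_two_rpow_mul hp.le (by linarith) (neg_nonneg.2 hb) hc
  rw [sub_sub_cancel, neg_add_eq_sub] at hconcave
  rw [← intervalIntegral.integral_add_adjacent_intervals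
    (intervalIntegrable_abs_rpow_neg hα1 b 0) (intervalIntegrable_abs_rpow_neg hα1 0 c)]
  calc (∫ u in b..0, |u| ^ (-α)) + ∫ u in (0:ℝ)..c, |u| ^ (-α)
      ≤ ((-b) ^ (1 - α) + c ^ (1 - α)) / (1 - α) := by rw [add_div]; exact add_le_add hleft hright
    _ ≤ 2 ^ α / (1 - α) * (c - b) ^ (1 - α) := by
      rw [div_mul_eq_mul_div]
      gcongr

lemma enorm_rpow_neg_eq_ofReal {u : ℝ} (hu : u ≠ 0) :
    ‖u‖ₑ ^ (-α) = ENNReal.ofReal (|u| ^ (-α)) := by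
  rw [Real.enorm_eq_ofReal_abs, ENNReal.ofReal_rpow_of_pos (abs_pos.2 hu)]

lemma setLIntegral_enorm_add_rpow_neg_le (hα0 : 0 ≤ α) (hα1 : α < 1) {T : ℝ} (hT : 0 ≤ T)
    (c : ℝ) :
    ∫⁻ τ in Icc 0 T, ‖τ + c‖ₑ ^ (-α) ≤ ENNReal.ofReal (2 ^ α / (1 - α) * T ^ (1 - α)) := by
  have hae : ∀ᵐ τ ∂volume.restrict (Icc 0 T),
      ‖τ + c‖ₑ ^ (-α) = ENNReal.ofReal (|τ + c| ^ (-α)) := by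
    filter_upwards [Measure.ae_ne _ (-c)] with τ hτ
    exact enorm_rpow_neg_eq_ofReal (by contrapose! hτ; linarith)
  have hint : IntegrableOn (fun τ => |τ + c| ^ (-α)) (Icc 0 T) := by
    rw [← intervalIntegrable_iff_integrableOn_Icc_of_le hT]
    simpa using (intervalIntegrable_abs_rpow_neg hα1 (0 + c) (T + c)).comp_add_right c
  rw [lintegral_congr_ae hae, ← ofReal_integral_eq_lintegral_ofReal hint
    (ae_of_all _ fun τ => by positivity), integral_Icc_eq_integral_Ioc,
    ← intervalIntegral.integral_of_le hT,
    intervalIntegral.integral_comp_add_right (fun u => |u| ^ (-α))]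
  gcongr
  simpa using integral_abs_rpow_neg_le hα0 hα1 (by linarith : 0 + c ≤ T + c)

lemma setLIntegral_enorm_add_mul_rpow_neg_le (hα0 : 0 < α) (hα1 : α < 1) {T : ℝ} (hT : 0 < T)
    (a s : ℝ) :
    ∫⁻ τ in Icc 0 T, ‖a + τ * s‖ₑ ^ (-α)
      ≤ ENNReal.ofReal (2 ^ α / (1 - α) * T ^ (1 - α)) * ‖s‖ₑ ^ (-α) := by
  rcases eq_or_ne s 0 with rfl | hs
  · rw [enorm_zero, ENNReal.zero_rpow_of_neg (by linarith), ENNReal.mul_top]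
    · exact le_top
    · have : 0 < 1 - α := by linarith
      positivity
  have hfactor : ∀ τ, ‖a + τ * s‖ₑ ^ (-α) = ‖s‖ₑ ^ (-α) * ‖τ + a / s‖ₑ ^ (-α) := fun τ => by
    rw [← ENNReal.mul_rpow_of_ne_top enorm_ne_top enorm_ne_top, ← enorm_mul]
    congr 2
    field_simp
    ring
  simp_rw [hfactor]
  rw [lintegral_const_mul' _ _
    (ENNReal.rpow_ne_top_of_ne_zero (enorm_ne_zero.2 hs) enorm_ne_top), mul_comm]
  gcongr
  exact setLIntegral_enorm_add_rpow_neg_le hα0.le hα1 hT.le _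

lemma ofReal_rpow_neg_le_enorm_rpow_neg (hα : 0 < α) {u m : ℝ} (h : |u| ≤ m) :
    ENNReal.ofReal (m ^ (-α)) ≤ ‖u‖ₑ ^ (-α) := by
  rcases eq_or_ne u 0 with rfl | hu
  · simp [ENNReal.zero_rpow_of_neg (neg_neg_of_pos hα)]
  rw [enorm_rpow_neg_eq_ofReal hu]
  exact ENNReal.ofReal_le_ofReal (rpow_le_rpow_of_nonpos (abs_pos.2 hu) h (by linarith))

lemma enorm_rpow_neg_le_ofReal (hα : 0 ≤ α) {v m : ℝ} (hm : 0 < m) (h : m ≤ |v|) :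
    ‖v‖ₑ ^ (-α) ≤ ENNReal.ofReal (m ^ (-α)) := by
  rw [enorm_rpow_neg_eq_ofReal (abs_pos.1 (hm.trans_le h))]
  exact ENNReal.ofReal_le_ofReal (rpow_le_rpow_of_nonpos hm h (by linarith))

lemma enorm_rpow_neg_le_of_abs_le (hα : 0 < α) {c u v : ℝ} (hc : 0 < c) (h : |u| ≤ c * |v|) :
    ‖v‖ₑ ^ (-α) ≤ ENNReal.ofReal (c ^ α) * ‖u‖ₑ ^ (-α) := by
  rcases eq_or_ne u 0 with rfl | hu
  · rw [enorm_zero, ENNReal.zero_rpow_of_neg (neg_neg_of_pos hα), ENNReal.mul_top]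
    · exact le_top
    · positivity
  have hv : 0 < |v| := pos_of_mul_pos_right ((abs_pos.2 hu).trans_le h) hc.le
  rw [enorm_rpow_neg_eq_ofReal hu, enorm_rpow_neg_eq_ofReal (abs_pos.1 hv),
    ← ENNReal.ofReal_mul (by positivity)]
  refine ENNReal.ofReal_le_ofReal ?_
  calc |v| ^ (-α) = c ^ α * (c * |v|) ^ (-α) := by
        rw [mul_rpow hc.le hv.le, rpow_neg hc.le, ← mul_assoc, mul_inv_cancel₀ (by positivity),
          one_mul]
    _ ≤ c ^ α * |u| ^ (-α) := by
        have := rpow_le_rpow_of_nonpos (abs_pos.2 hu) h (neg_nonpos.2 hα.le)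
        gcongr

end OneDim

lemma setLIntegral_prod_le {X Y : Type*} [MeasurableSpace X] [MeasurableSpace Y]
    {μ : Measure X} {ν : Measure Y} [SFinite μ] [SFinite ν] (f : X × Y → ENNReal)
    (s : Set X) (t : Set Y) :
    ∫⁻ z in s ×ˢ t, f z ∂μ.prod ν ≤ ∫⁻ x in s, ∫⁻ y in t, f (x, y) ∂ν ∂μ := by
  rw [← Measure.prod_restrict]
  exact lintegral_prod_le f

section Square

variable {α T : ℝ}

lemma setLIntegral_square_enorm_fst_rpow_neg_le (hα0 : 0 < α) (hα1 : α < 1) (hT : 0 < T)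
    (x s : ℝ) :
    ∫⁻ τ in Icc ((0, 0) : ℝ × ℝ) (T, T), ‖x + τ.1 * s‖ₑ ^ (-α)
      ≤ ENNReal.ofReal T * (ENNReal.ofReal (2 ^ α / (1 - α) * T ^ (1 - α)) * ‖s‖ₑ ^ (-α)) := by
  rw [Icc_prod_eq, Measure.volume_eq_prod]
  calc _ ≤ ∫⁻ a in Icc 0 T, ∫⁻ _ in Icc 0 T, ‖x + a * s‖ₑ ^ (-α) := setLIntegral_prod_le _ _ _
    _ = ENNReal.ofReal T * ∫⁻ a in Icc 0 T, ‖x + a * s‖ₑ ^ (-α) := by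
        simp_rw [setLIntegral_const, Real.volume_Icc, sub_zero, mul_comm _ (ENNReal.ofReal T)]
        exact lintegral_const_mul' _ _ ENNReal.ofReal_ne_top
    _ ≤ _ := by
        gcongr
        exact setLIntegral_enorm_add_mul_rpow_neg_le hα0 hα1 hT x s

lemma setLIntegral_square_enorm_snd_rpow_neg_le (hα0 : 0 < α) (hα1 : α < 1) (hT : 0 < T)
    (y : ℝ) (g : ℝ → ℝ) :
    ∫⁻ τ in Icc ((0, 0) : ℝ × ℝ) (T, T), ‖y + τ.2 * g τ.1‖ₑ ^ (-α)
      ≤ ENNReal.ofReal (2 ^ α / (1 - α) * T ^ (1 - α)) * ∫⁻ a in Icc 0 T, ‖g a‖ₑ ^ (-α) := by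
  rw [Icc_prod_eq, Measure.volume_eq_prod]
  calc _ ≤ ∫⁻ a in Icc 0 T, ∫⁻ b in Icc 0 T, ‖y + b * g a‖ₑ ^ (-α) := setLIntegral_prod_le _ _ _
    _ ≤ ∫⁻ a in Icc 0 T,
          ENNReal.ofReal (2 ^ α / (1 - α) * T ^ (1 - α)) * ‖g a‖ₑ ^ (-α) :=
        lintegral_mono fun a => setLIntegral_enorm_add_mul_rpow_neg_le hα0 hα1 hT y (g a)
    _ = _ := lintegral_const_mul' _ _ ENNReal.ofReal_ne_top

end Square

lemma integral_le_of_lintegral_ofReal_le {X : Type*} [MeasurableSpace X] {μ : Measure X}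
    {f : X → ℝ} {B : ℝ} (hB : 0 ≤ B) (hf : 0 ≤ᵐ[μ] f)
    (h : ∫⁻ x, ENNReal.ofReal (f x) ∂μ ≤ ENNReal.ofReal B) : ∫ x, f x ∂μ ≤ B := by
  by_cases hint : Integrable f μ
  · rwa [← ENNReal.ofReal_le_ofReal_iff hB, ofReal_integral_eq_lintegral_ofReal hint hf]
  · rw [integral_undef hint]
    exact hB

lemma mul_rpow_neg_le_of_pow_le {α c D Q M r : ℝ} {n : ℕ} (hαn : α * n = 1) (hc : 0 ≤ c)
    (hD : 0 ≤ D) (hQ : 0 < Q) (hr : 0 < r) (hM : Q * r ≤ M) (hDn : D ^ n ≤ c ^ n * Q) :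
    D * M ^ (-α) ≤ c * r ^ (-α) := by
  have hn : n ≠ 0 := by rintro rfl; simp at hαn
  have hα : 0 ≤ α := by
    have : (0 : ℝ) < n := by positivity
    nlinarith
  have hDQ : D ≤ c * Q ^ α := by
    rw [← pow_le_pow_iff_left₀ hD (by positivity) hn, mul_pow, ← rpow_natCast (Q ^ α),
      ← rpow_mul hQ.le, hαn, rpow_one]
    exact hDn
  calc D * M ^ (-α) ≤ D * (Q * r) ^ (-α) :=
        mul_le_mul_of_nonneg_left (rpow_le_rpow_of_nonpos (mul_pos hQ hr) hM (neg_nonpos.2 hα)) hD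
    _ ≤ c * Q ^ α * (Q * r) ^ (-α) := by gcongr
    _ = c * r ^ (-α) := by
        rw [mul_rpow hQ.le hr.le, rpow_neg hQ.le]
        field_simp

lemma rpow_one_sub_eq_mul {T : ℝ} (hT : 0 < T) (α : ℝ) : T ^ (1 - α) = T * T ^ (-α) := by
  rw [sub_eq_add_neg, rpow_add hT, rpow_one]

lemma two_rpow_one_div_twenty_pow : ((2 : ℝ) ^ (1 / 20 : ℝ)) ^ 20 = 2 := by
  rw [← rpow_natCast, ← rpow_mul zero_le_two]
  norm_num

lemma abs_le_two_mul_abs_sin {t : ℝ} (ht : |t| ≤ π / 2) : |t| ≤ 2 * |sin t| := by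
  have h := mul_abs_le_abs_sin ht
  have hπ : 2 / π * |t| ≥ |t| / 2 := by
    rw [ge_iff_le, div_mul_eq_mul_div, div_le_div_iff₀ two_pos pi_pos]
    nlinarith [pi_lt_four, abs_nonneg t]
  linarith

lemma abs_mul_le_of_mem_Icc {a T : ℝ} (ha : a ∈ Icc 0 T) (s : ℝ) : |a * s| ≤ T * |s| := by
  rw [abs_mul, abs_of_nonneg ha.1]
  exact mul_le_mul_of_nonneg_right ha.2 (abs_nonneg s)

lemma Vdrift_nonneg (q : ℝ × ℝ) : 0 ≤ Vdrift q := by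
  unfold Vdrift
  positivity

lemma ofReal_Vdrift_le_fst (q : ℝ × ℝ) :
    ENNReal.ofReal (Vdrift q) ≤ ‖q.1‖ₑ ^ (-(1 / 20 : ℝ)) :=
  ofReal_rpow_neg_le_enorm_rpow_neg (by norm_num) (le_max_left _ _)

lemma ofReal_Vdrift_le_snd (q : ℝ × ℝ) :
    ENNReal.ofReal (Vdrift q) ≤ ‖q.2‖ₑ ^ (-(1 / 20 : ℝ)) :=
  ofReal_rpow_neg_le_enorm_rpow_neg (by norm_num) (le_max_right _ _)

lemma Vdrift_mk (x y : ℝ) : Vdrift (x, y) = max |x| |y| ^ (-(1 / 20 : ℝ)) := rfl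

section Shear

/- The thresholds `8`, `23`, `125` are what makes `D ^ 20 ≤ (1 - 10⁻⁴) ^ 20 * Q` hold in
`mul_rpow_neg_le_of_pow_le`, with `(D, Q) = (C, 8), (C, T / 4), (C ^ 2 * 2 ^ (1/20), T / 2)` and
`C = 2 ^ (1/20) / (1 - 1/20)`, `C ^ 20 = 2 (20/19) ^ 20 ≈ 5.6`. -/

variable {T x y : ℝ}

lemma setLIntegral_Vdrift_oneStep_le_of_large_shear (hT : 0 < T) (hr : 0 < max |x| |y|)
    (hshear : 8 * max |x| |y| ≤ T * |sin y|) :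
    ∫⁻ τ in Icc ((0, 0) : ℝ × ℝ) (T, T), ENNReal.ofReal (Vdrift (oneStep τ (x, y)))
      ≤ ENNReal.ofReal (T ^ 2 * ((1 - 1 / 10 ^ 4) * Vdrift (x, y))) := by
  have hs : 0 < |sin y| :=
    pos_of_mul_pos_right ((by positivity : (0:ℝ) < 8 * max |x| |y|).trans_le hshear) hT.le
  calc _ ≤ ∫⁻ τ in Icc ((0, 0) : ℝ × ℝ) (T, T), ‖x + τ.1 * sin y‖ₑ ^ (-(1 / 20 : ℝ)) :=
        lintegral_mono fun τ => ofReal_Vdrift_le_fst _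
    _ ≤ ENNReal.ofReal T * (ENNReal.ofReal (2 ^ (1 / 20 : ℝ) / (1 - 1 / 20) * T ^ (1 - 1 / 20 : ℝ))
          * ‖sin y‖ₑ ^ (-(1 / 20 : ℝ))) :=
        setLIntegral_square_enorm_fst_rpow_neg_le (by norm_num) (by norm_num) hT x (sin y)
    _ = ENNReal.ofReal (T ^ 2 *
          (2 ^ (1 / 20 : ℝ) / (1 - 1 / 20) * (T * |sin y|) ^ (-(1 / 20 : ℝ)))) := by
        rw [enorm_rpow_neg_eq_ofReal (abs_pos.1 hs), ← ENNReal.ofReal_mul (by positivity),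
          ← ENNReal.ofReal_mul hT.le, rpow_one_sub_eq_mul hT, mul_rpow hT.le hs.le]
        ring_nf
    _ ≤ _ := by
        rw [Vdrift_mk]
        refine ENNReal.ofReal_le_ofReal (mul_le_mul_of_nonneg_left ?_ (sq_nonneg T))
        refine mul_rpow_neg_le_of_pow_le (n := 20) ?_ ?_ ?_ (by norm_num) hr hshear ?_
        · norm_num
        · norm_num
        · positivity
        · rw [div_pow, two_rpow_one_div_twenty_pow]
          norm_num

lemma setLIntegral_Vdrift_oneStep_le_snd (hT : 0 < T) :
    ∫⁻ τ in Icc ((0, 0) : ℝ × ℝ) (T, T), ENNReal.ofReal (Vdrift (oneStep τ (x, y)))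
      ≤ ENNReal.ofReal (2 ^ (1 / 20 : ℝ) / (1 - 1 / 20) * T ^ (1 - 1 / 20 : ℝ))
          * ∫⁻ a in Icc 0 T, ‖sin (x + a * sin y)‖ₑ ^ (-(1 / 20 : ℝ)) :=
  (lintegral_mono fun τ => ofReal_Vdrift_le_snd _).trans
    (setLIntegral_square_enorm_snd_rpow_neg_le (by norm_num) (by norm_num) hT y _)

lemma setLIntegral_Vdrift_oneStep_le_of_small_shear (hT : 23 ≤ T) (hx : 0 < |x|)
    (hyx : |y| ≤ |x|) (hshear : T * |sin y| ≤ |x| / 2) (hπ : |x| + T * |sin y| ≤ π / 2) :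
    ∫⁻ τ in Icc ((0, 0) : ℝ × ℝ) (T, T), ENNReal.ofReal (Vdrift (oneStep τ (x, y)))
      ≤ ENNReal.ofReal (T ^ 2 * ((1 - 1 / 10 ^ 4) * Vdrift (x, y))) := by
  have hT0 : 0 < T := by linarith
  have hsin : ∀ a ∈ Icc 0 T, |x| / 4 ≤ |sin (x + a * sin y)| := fun a ha => by
    have hmove := abs_mul_le_of_mem_Icc ha (sin y)
    have hfar : |x| ≤ |x + a * sin y| + |a * sin y| := by
      simpa using abs_add_le (x + a * sin y) (-(a * sin y))
    have hnear := abs_le_two_mul_abs_sin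
      (((abs_add_le x (a * sin y)).trans (by linarith)).trans hπ)
    linarith
  calc _ ≤ ENNReal.ofReal (2 ^ (1 / 20 : ℝ) / (1 - 1 / 20) * T ^ (1 - 1 / 20 : ℝ))
          * ∫⁻ a in Icc 0 T, ‖sin (x + a * sin y)‖ₑ ^ (-(1 / 20 : ℝ)) :=
        setLIntegral_Vdrift_oneStep_le_snd hT0
    _ ≤ ENNReal.ofReal (2 ^ (1 / 20 : ℝ) / (1 - 1 / 20) * T ^ (1 - 1 / 20 : ℝ))
          * ∫⁻ _ in Icc 0 T, ENNReal.ofReal ((|x| / 4) ^ (-(1 / 20 : ℝ))) := by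
        refine mul_le_mul_right (setLIntegral_mono' measurableSet_Icc fun a ha => ?_) _
        exact enorm_rpow_neg_le_ofReal (by norm_num) (by positivity) (hsin a ha)
    _ = ENNReal.ofReal (T ^ 2 *
          (2 ^ (1 / 20 : ℝ) / (1 - 1 / 20) * (T / 4 * |x|) ^ (-(1 / 20 : ℝ)))) := by
        rw [setLIntegral_const, Real.volume_Icc, ← ENNReal.ofReal_mul (by positivity),
          ← ENNReal.ofReal_mul (by positivity), rpow_one_sub_eq_mul hT0,
          show T / 4 * |x| = T * (|x| / 4) by ring, mul_rpow hT0.le (by positivity)]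
        ring_nf
    _ ≤ _ := by
        rw [Vdrift_mk, max_eq_left hyx]
        refine ENNReal.ofReal_le_ofReal (mul_le_mul_of_nonneg_left ?_ (sq_nonneg T))
        refine mul_rpow_neg_le_of_pow_le (n := 20) ?_ ?_ ?_ (by positivity) hx le_rfl ?_
        · norm_num
        · norm_num
        · positivity
        · rw [div_pow, two_rpow_one_div_twenty_pow]
          norm_num
          linarith

lemma setLIntegral_Vdrift_oneStep_le_of_moderate_shear (hT : 125 ≤ T) (hx : 0 < |x|)
    (hyx : |y| ≤ |x|) (hshear : |x| / 2 < T * |sin y|) (hπ : |x| + T * |sin y| ≤ π / 2) :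
    ∫⁻ τ in Icc ((0, 0) : ℝ × ℝ) (T, T), ENNReal.ofReal (Vdrift (oneStep τ (x, y)))
      ≤ ENNReal.ofReal (T ^ 2 * ((1 - 1 / 10 ^ 4) * Vdrift (x, y))) := by
  have hT0 : 0 < T := by linarith
  have hs : 0 < |sin y| := pos_of_mul_pos_right (by linarith [abs_nonneg x]) hT0.le
  have hsin : ∀ a ∈ Icc 0 T, |x + a * sin y| ≤ 2 * |sin (x + a * sin y)| := fun a ha =>
    abs_le_two_mul_abs_sin (((abs_add_le _ _).trans
      (by linarith [abs_mul_le_of_mem_Icc ha (sin y)])).trans hπ)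
  calc _ ≤ ENNReal.ofReal (2 ^ (1 / 20 : ℝ) / (1 - 1 / 20) * T ^ (1 - 1 / 20 : ℝ))
          * ∫⁻ a in Icc 0 T, ‖sin (x + a * sin y)‖ₑ ^ (-(1 / 20 : ℝ)) :=
        setLIntegral_Vdrift_oneStep_le_snd hT0
    _ ≤ ENNReal.ofReal (2 ^ (1 / 20 : ℝ) / (1 - 1 / 20) * T ^ (1 - 1 / 20 : ℝ))
          * ∫⁻ a in Icc 0 T, ENNReal.ofReal (2 ^ (1 / 20 : ℝ))
            * ‖x + a * sin y‖ₑ ^ (-(1 / 20 : ℝ)) := by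
        refine mul_le_mul_right (setLIntegral_mono' measurableSet_Icc fun a ha => ?_) _
        exact enorm_rpow_neg_le_of_abs_le (by norm_num) two_pos (hsin a ha)
    _ ≤ ENNReal.ofReal (2 ^ (1 / 20 : ℝ) / (1 - 1 / 20) * T ^ (1 - 1 / 20 : ℝ))
          * (ENNReal.ofReal (2 ^ (1 / 20 : ℝ))
            * (ENNReal.ofReal (2 ^ (1 / 20 : ℝ) / (1 - 1 / 20) * T ^ (1 - 1 / 20 : ℝ))
              * ‖sin y‖ₑ ^ (-(1 / 20 : ℝ)))) := by
        rw [lintegral_const_mul' _ _ ENNReal.ofReal_ne_top]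
        exact mul_le_mul_right (mul_le_mul_right
          (setLIntegral_enorm_add_mul_rpow_neg_le (by norm_num) (by norm_num) hT0 x (sin y)) _) _
    _ = ENNReal.ofReal (T ^ 2 * ((2 ^ (1 / 20 : ℝ) / (1 - 1 / 20)) ^ 2 * 2 ^ (1 / 20 : ℝ)
          * (T * (T * |sin y|)) ^ (-(1 / 20 : ℝ)))) := by
        rw [enorm_rpow_neg_eq_ofReal (abs_pos.1 hs), ← ENNReal.ofReal_mul (by positivity),
          ← ENNReal.ofReal_mul (by positivity), ← ENNReal.ofReal_mul (by positivity),
          rpow_one_sub_eq_mul hT0, mul_rpow hT0.le (by positivity), mul_rpow hT0.le hs.le]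
        ring_nf
    _ ≤ _ := by
        rw [Vdrift_mk, max_eq_left hyx]
        refine ENNReal.ofReal_le_ofReal (mul_le_mul_of_nonneg_left ?_ (sq_nonneg T))
        refine mul_rpow_neg_le_of_pow_le (n := 20) (Q := T / 2) ?_ ?_ ?_ (by positivity) hx ?_ ?_
        · norm_num
        · norm_num
        · positivity
        · nlinarith
        · rw [mul_pow, two_rpow_one_div_twenty_pow, ← pow_mul, mul_comm 2 20, pow_mul, div_pow,
            two_rpow_one_div_twenty_pow]
          norm_num
          linarith

end Shear

/-- The local Lyapunov–Foster drift condition at the fixed point: for `T ≥ 5·10⁵`, the average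
of `V` after one random step (with the two durations independent uniform on `[0,T]`) contracts
by the factor `c = 1 − 10⁻⁴` on a small punctured square around the origin. -/
theorem drift_condition (T : ℝ) (hT : 5 * 10 ^ 5 ≤ T) :
    ∃ r₀ > (0:ℝ), ∀ p : ℝ × ℝ,
      p ∈ Set.Icc ((-r₀, -r₀) : ℝ × ℝ) ((r₀, r₀) : ℝ × ℝ) → p ≠ 0 →
      (T ^ 2)⁻¹ * (∫ τ in Set.Icc ((0, 0) : ℝ × ℝ) ((T, T) : ℝ × ℝ), Vdrift (oneStep τ p))
        ≤ (1 - 1 / 10 ^ 4) * Vdrift p := by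
  refine ⟨1 / 10, by norm_num, ?_⟩
  rintro ⟨x, y⟩ ⟨⟨hx₁, hy₁⟩, hx₂, hy₂⟩ hp
  have hT0 : 0 < T := by linarith
  have hx : |x| ≤ 1 / 10 := abs_le.2 ⟨hx₁, hx₂⟩
  have hy : |y| ≤ 1 / 10 := abs_le.2 ⟨hy₁, hy₂⟩
  have hr : 0 < max |x| |y| := by
    contrapose! hp
    simp_all [abs_nonpos_iff]
  rw [inv_mul_le_iff₀ (by positivity)]
  refine integral_le_of_lintegral_ofReal_le (by positivity [Vdrift_nonneg (x, y)])
    (ae_of_all _ fun τ => Vdrift_nonneg _) ?_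
  rcases le_or_gt (8 * max |x| |y|) (T * |sin y|) with hlarge | hsmall
  · exact setLIntegral_Vdrift_oneStep_le_of_large_shear hT0 hr hlarge
  have hyx : |y| ≤ |x| := by
    have := abs_le_two_mul_abs_sin (hy.trans (by linarith [pi_gt_three]))
    by_contra! hxy
    rw [max_eq_right hxy.le] at hsmall
    nlinarith [mul_le_mul_of_nonneg_left this hT0.le, abs_nonneg x]
  rw [max_eq_left hyx] at hr hsmall
  have hπ : |x| + T * |sin y| ≤ π / 2 := by linarith [pi_gt_three]
  rcases le_or_gt (T * |sin y|) (|x| / 2) with hslow | hfast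
  · exact setLIntegral_Vdrift_oneStep_le_of_small_shear (by linarith) hr hyx hslow hπ
  · exact setLIntegral_Vdrift_oneStep_le_of_moderate_shear (by linarith) hr hyx hfast hπ
end

section
/- Let Φ be a C¹ map of ℝ² with fixed point p such that DΦ(p) = 0, and let h ∈ (0,1), C > 1 satisfy |Φ(x) − p| ≤ |x − p| + C·|x − p|² for all x ∈ B_h(p). Then for every n ∈ ℕ and every x with |x − p| ≤ h/(e·n·C), the n-th iterate satisfies |Φⁿ(x) − p| ≤ h. -/
/-!
Within distance `h / (n C)` of `p` one step of the map expands the distance to `p` by at most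
the factor `1 + 1/n`. Hence, as long as the orbit stays in that region, after `k ≤ n` steps the
distance is at most `(1 + 1/n) ^ k ≤ e` times the initial one, and the factor `e` built into
the initial radius `h / (e n C)` keeps the orbit in the region up to time `n`.
-/

open Real

theorem le_pow_mul_of_succ_le_mul {u : ℕ → ℝ} {n : ℕ} {q a b : ℝ} (hq : 1 ≤ q) (ha : 0 ≤ a)
    (hqa : q ^ n * a ≤ b) (h0 : u 0 ≤ a) (hstep : ∀ k < n, u k ≤ b → u (k + 1) ≤ q * u k) :
    ∀ k ≤ n, u k ≤ q ^ k * a := by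
  intro k hk
  induction k with
  | zero => simpa using h0
  | succ k ih =>
    have hkn : k < n := hk
    have huk := ih hkn.le
    have hub : u k ≤ b :=
      huk.trans <| (mul_le_mul_of_nonneg_right (pow_le_pow_right₀ hq hkn.le) ha).trans hqa
    calc u (k + 1) ≤ q * u k := hstep k hkn hub
      _ ≤ q * (q ^ k * a) := by gcongr
      _ = q ^ (k + 1) * a := by ring

theorem add_mul_sq_le_one_add_mul {d C ε : ℝ} (hd : 0 ≤ d) (hCd : C * d ≤ ε) :
    d + C * d ^ 2 ≤ (1 + ε) * d := by
  nlinarith [mul_le_mul_of_nonneg_left hCd hd]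

theorem dist_iterate_le_of_dist_le_add_mul_sq {X : Type*} [PseudoMetricSpace X] {f : X → X}
    {p : X} {h C : ℝ} (hh₀ : 0 ≤ h) (hh₁ : h ≤ 1) (hC : 1 ≤ C)
    (hf : ∀ y, dist y p ≤ h → dist (f y) p ≤ dist y p + C * dist y p ^ 2)
    (n : ℕ) {x : X} (hx : dist x p ≤ h / (exp 1 * n * C)) : dist (f^[n] x) p ≤ h := by
  rcases n.eq_zero_or_pos with rfl | hn
  · -- for `n = 0` the radius is `h / 0 = 0`
    simpa using hx.trans (by simp [hh₀])
  have hnC : 1 ≤ (n : ℝ) * C := one_le_mul_of_one_le_of_one_le (by exact_mod_cast hn) hC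
  have hbh : h / (n * C) ≤ h := div_le_self hh₀ hnC
  have hqa : (1 + (n : ℝ)⁻¹) ^ n * (h / (exp 1 * n * C)) ≤ h / (n * C) :=
    calc (1 + (n : ℝ)⁻¹) ^ n * (h / (exp 1 * n * C))
        ≤ exp 1 * (h / (exp 1 * n * C)) := by gcongr; exact one_add_inv_pow_le_exp
      _ = h / (n * C) := by field_simp
  have hstep (k : ℕ) (_ : k < n) (hk : dist (f^[k] x) p ≤ h / (n * C)) :
      dist (f^[k + 1] x) p ≤ (1 + (n : ℝ)⁻¹) * dist (f^[k] x) p := by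
    have hCd : C * dist (f^[k] x) p ≤ (n : ℝ)⁻¹ :=
      calc C * dist (f^[k] x) p ≤ C * (h / (n * C)) := by gcongr
        _ = h / n := by field_simp
        _ ≤ (n : ℝ)⁻¹ := by rw [inv_eq_one_div]; gcongr
    rw [Function.iterate_succ_apply']
    exact (hf _ (hk.trans hbh)).trans (add_mul_sq_le_one_add_mul dist_nonneg hCd)
  have horbit := le_pow_mul_of_succ_le_mul (u := fun k ↦ dist (f^[k] x) p)
    (le_add_of_nonneg_right (by positivity)) (by positivity) hqa hx hstep
  exact ((horbit n le_rfl).trans hqa).trans hbh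

theorem iterates_stay_close_general
    (Φ : ℝ × ℝ → ℝ × ℝ) (p : ℝ × ℝ)
    (h C : ℝ) (hh : h ∈ Set.Ioo (0:ℝ) 1) (hCgt : 1 < C)
    (hquad : ∀ x : ℝ × ℝ, ‖x - p‖ ≤ h → ‖Φ x - p‖ ≤ ‖x - p‖ + C * ‖x - p‖ ^ 2) :
    ∀ (n : ℕ) (x : ℝ × ℝ), ‖x - p‖ ≤ h / (Real.exp 1 * n * C) → ‖Φ^[n] x - p‖ ≤ h := by
  intro n x hx
  simp only [← dist_eq_norm] at hquad hx ⊢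
  exact dist_iterate_le_of_dist_le_add_mul_sq hh.1.le hh.2.le hCgt.le hquad n hx

/-- Iterating a `C¹` map with a degenerate fixed point (`DΦ(p) = 0`) whose displacement is
quadratically small near `p`: points starting within `h/(e·n·C)` of `p` remain within `h`
after `n` iterations. -/
theorem iterates_stay_close
    (Φ : ℝ × ℝ → ℝ × ℝ) (p : ℝ × ℝ)
    (hC1 : ContDiff ℝ 1 Φ) (hfix : Φ p = p) (hD : fderiv ℝ Φ p = 0)
    (h C : ℝ) (hh : h ∈ Set.Ioo (0:ℝ) 1) (hCgt : 1 < C)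
    (hquad : ∀ x : ℝ × ℝ, ‖x - p‖ ≤ h → ‖Φ x - p‖ ≤ ‖x - p‖ + C * ‖x - p‖ ^ 2) :
    ∀ (n : ℕ) (x : ℝ × ℝ), ‖x - p‖ ≤ h / (Real.exp 1 * n * C) → ‖Φ^[n] x - p‖ ≤ h :=
  iterates_stay_close_general Φ p h C hh hCgt hquad
end
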